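/- arXiv:1108.1671 — 2 statements merged into one kernel-verified Lean document; each statement's English description precedes it below -/
import Mathlib

section
/- Let k ≥ 2, C ⊆ E_k, α ∈ E_k^{n−2}, ρ ∈ R_k^n, and a ∈ C. Suppose: (i) for every d ∈ C there exists β ∈ E_k^{n−2} with ρ(d d β) = 1; (ii) the sets D_0 = {a} and D_{i+1} = { e ∈ C : ∃ d ∈ D_i, ρ(d e α) = 1 } satisfy that for every m ≥ 1 there exists j ≥ m with D_j ≠ D_{j+1}. Then the set [{ρ, (x∈C)} ∪ SR_k] ∩ R̃_k is infinite. -/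
/-!
Let `G = {ρ, (x ∈ C)} ∪ SR_k`. If the essential predicates of `[G]` had arity at most `N`, every
predicate of `[G]` would be determined by its `N`-ary projections. The values of the
`(N+1)`-ary polymorphisms of `G` on the columns of the near-unanimity identities form such a
predicate, and each of its `N`-ary projections is attained by a projection map, so `G` has a
near-unanimity polymorphism. Such a polymorphism merges `N + 1` walks from `a` that each pause
once (via `ρ(d d β)`) into a walk one step longer with the same end, so `D_j ⊆ D_{j+1}` for
large `j`; in the finite set `E_k` the sets `D_j` then stabilize, contradicting (ii).
-/

/-- Tuples over `E_k = Fin k`. -/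
abbrev Tuple (k n : ℕ) := Fin n → Fin k

/-- A predicate on `E_k`: an arity together with a set of tuples of that arity. -/
abbrev Pred (k : ℕ) := Σ n : ℕ, Set (Tuple k n)

/-- The binary equality predicate `σ_k^=`. -/
def eqPred (k : ℕ) : Pred k := ⟨2, {t | t 0 = t 1}⟩

/-- The 0-ary predicate `false`. -/
def falsePred (k : ℕ) : Pred k := ⟨0, ∅⟩

/-- `[S]`: primitive positive closure of a set of predicates. -/
def ppClosure (k : ℕ) (S : Set (Pred k)) : Set (Pred k) :=
  { ρ | ∃ (l s : ℕ) (σ : Fin s → Pred k)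
      (z : (i : Fin s) → Fin (σ i).1 → Fin (ρ.1 + l)),
      (∀ i, σ i ∈ S ∪ {eqPred k, falsePred k}) ∧
      ∀ x : Tuple k ρ.1, x ∈ ρ.2 ↔
        ∃ y : Tuple k l, ∀ i, (fun j => Fin.append x y (z i j)) ∈ (σ i).2 }

/-- `AND(S)`: quantifier-free conjunctions of predicates of `S`, with no
repeated variable inside a single conjunct. -/
def andClosure (k : ℕ) (S : Set (Pred k)) : Set (Pred k) :=
  { ρ | ∃ (s : ℕ) (σ : Fin s → Pred k)
      (z : (i : Fin s) → Fin (σ i).1 → Fin ρ.1),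
      (∀ i, σ i ∈ S) ∧ (∀ i, Function.Injective (z i)) ∧
      ∀ x : Tuple k ρ.1, x ∈ ρ.2 ↔ ∀ i, (fun j => x (z i j)) ∈ (σ i).2 }

/-- An essential predicate: not a conjunction of predicates of smaller arity. -/
def Essential (k : ℕ) (ρ : Pred k) : Prop :=
  ρ ∉ andClosure k { σ : Pred k | σ.1 < ρ.1 }

/-- `f` preserves the predicate `ρ`. -/
def Preserves {k m : ℕ} (f : Tuple k m → Fin k) (ρ : Pred k) : Prop :=
  ∀ α : Fin m → Tuple k ρ.1, (∀ i, α i ∈ ρ.2) →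
    (fun j => f fun i => α i j) ∈ ρ.2

/-- `f` is a near-unanimity function. -/
def IsNUF {k n : ℕ} (f : Tuple k n → Fin k) : Prop :=
  ∀ x y : Fin k, ∀ i : Fin n, f (Function.update (fun _ => y) i x) = y

/-- `Pol(G)` contains a near-unanimity function of arity `n`. -/
def HasNUF (k : ℕ) (G : Set (Pred k)) (n : ℕ) : Prop :=
  ∃ f : Tuple k n → Fin k, IsNUF f ∧ ∀ ρ ∈ G, Preserves f ρ

/-- `SR_k`: the unary singleton predicates `ρ_{=,a}`. -/
def SR (k : ℕ) : Set (Pred k) := { ρ | ∃ a : Fin k, ρ = ⟨1, {t | t 0 = a}⟩ }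

/-- The unary predicate `(x ∈ C)`. -/
def memPred (k : ℕ) (C : Set (Fin k)) : Pred k := ⟨1, { t | t 0 ∈ C }⟩

/-- `Strike(ρ)`: predicates obtained from `ρ` by existentially quantifying some
coordinates and injectively renaming the rest. -/
def strike (k : ℕ) (ρ : Pred k) : Set (Pred k) :=
  { ρ' | ∃ (l : ℕ) (z : Fin ρ.1 → Fin (ρ'.1 + l)),
      Function.Injective z ∧
      ∀ x : Tuple k ρ'.1, x ∈ ρ'.2 ↔
        ∃ y : Tuple k l, (fun j => Fin.append x y (z j)) ∈ ρ.2 }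

/-- The tuple `(d, e, α)`. -/
def pre2 {k m : ℕ} (d e : Fin k) (α : Tuple k m) : Tuple k (m + 2) :=
  Fin.cons d (Fin.cons e α)

/-- The `(m+2)`-ary chain predicate
`ρ(x_1,…,x_n) = ∃y_1…y_{n-1}, fst(x_1,y_1) ∧ ⋀ mid_i(y_i,x_{i+1},y_{i+1}) ∧ lst(y_{n-1},x_n)`. -/
def chainPred (k m : ℕ) (fst lst : Set (Tuple k 2))
    (mid : Fin m → Set (Tuple k 3)) : Pred k :=
  ⟨m + 2, { x | ∃ y : Tuple k (m + 1),
      ![x 0, y 0] ∈ fst ∧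
      (∀ i : Fin m, ![y i.castSucc, x i.succ.castSucc, y i.succ] ∈ mid i) ∧
      ![y (Fin.last m), x (Fin.last (m + 1))] ∈ lst }⟩

lemma Fin.exists_forall_ne_of_lt {m n : ℕ} (g : Fin m → Fin n) (h : m < n) :
    ∃ t, ∀ i, g i ≠ t := by
  by_contra! hg
  have := Fintype.card_le_of_surjective g hg
  simp only [Fintype.card_fin] at this
  omega

abbrev Atom (k : ℕ) (V : Type*) := Σ p : Pred k, Fin p.1 → V

namespace Atom

variable {k : ℕ} {V : Type*}

def Holds (A : Atom k V) (g : V → Fin k) : Prop := (fun j => g (A.2 j)) ∈ A.1.2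

def eq (u v : V) : Atom k V := ⟨eqPred k, ![u, v]⟩

@[simp]
lemma holds_mk (ρ : Pred k) (z : Fin ρ.1 → V) (g : V → Fin k) :
    Holds ⟨ρ, z⟩ g ↔ (fun j => g (z j)) ∈ ρ.2 :=
  Iff.rfl

@[simp]
lemma holds_eq (u v : V) (g : V → Fin k) : Holds (eq (k := k) u v) g ↔ g u = g v :=
  Iff.rfl

end Atom

section ppClosure

variable {k : ℕ} {S : Set (Pred k)}

lemma mem_ppClosure_of_atoms {n : ℕ} {ι κ : Type*} [Finite ι] [Finite κ]
    (atom : ι → Atom k (Fin n ⊕ κ)) (hatom : ∀ i, (atom i).1 ∈ S ∪ {eqPred k, falsePred k})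
    {T : Set (Tuple k n)} (hT : ∀ x, x ∈ T ↔ ∃ y : κ → Fin k, ∀ i, (atom i).Holds (Sum.elim x y)) :
    (⟨n, T⟩ : Pred k) ∈ ppClosure k S := by
  obtain ⟨l, ⟨eκ⟩⟩ := Finite.exists_equiv_fin κ
  obtain ⟨s, ⟨eι⟩⟩ := Finite.exists_equiv_fin ι
  have happend : ∀ (x : Tuple k n) (y : Fin l → Fin k) (v : Fin n ⊕ κ),
      Fin.append x y (finSumFinEquiv (Sum.map id eκ v)) = Sum.elim x (y ∘ eκ) v := by
    rintro x y (v | v) <;> simp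
  refine ⟨l, s, fun i => (atom (eι.symm i)).1,
    fun i j => finSumFinEquiv (Sum.map id eκ ((atom (eι.symm i)).2 j)),
    fun i => hatom _, fun x => ?_⟩
  simp only [happend, hT, Atom.Holds]
  constructor
  · rintro ⟨y, hy⟩
    exact ⟨y ∘ eκ.symm, fun i => by simpa [Function.comp_def] using hy (eι.symm i)⟩
  · rintro ⟨y, hy⟩
    refine ⟨y ∘ eκ, fun i => ?_⟩
    obtain ⟨i, rfl⟩ := eι.symm.surjective i
    exact hy i

lemma image_precomp_mem_ppClosure {n n' : ℕ} {T : Set (Tuple k n)} (w : Fin n' → Fin n)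
    (hT : (⟨n, T⟩ : Pred k) ∈ ppClosure k S) :
    (⟨n', (fun x i => x (w i)) '' T⟩ : Pred k) ∈ ppClosure k S := by
  obtain ⟨l, s, σ, z, hσ, hT⟩ := hT
  refine mem_ppClosure_of_atoms (κ := Fin (n + l))
    (Sum.elim (fun i => ⟨σ i, fun j => .inr (z i j)⟩)
      (fun i => .eq (.inl i) (.inr (Fin.castAdd l (w i)))))
    (Sum.rec (fun i => hσ i) (fun _ => Or.inr (Or.inl rfl))) fun u => ?_
  simp only [Sum.forall, Sum.elim_inl, Sum.elim_inr, Atom.holds_mk, Atom.holds_eq]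
  constructor
  · rintro ⟨x, hx, rfl⟩
    obtain ⟨y, hy⟩ := (hT x).1 hx
    exact ⟨Fin.append x y, hy, fun i => by simp⟩
  · rintro ⟨Y, hY, hu⟩
    refine ⟨fun i => Y (Fin.castAdd l i), (hT _).2 ⟨fun i => Y (Fin.natAdd n i), fun i => ?_⟩, ?_⟩
    · rw [Fin.append_castAdd_natAdd]
      exact hY i
    · exact funext fun i => (hu i).symm

end ppClosure

section Essential

variable {k : ℕ}

/-- Each conjunct has arity at most `n`, so it misses some coordinate `t` and is satisfied by a
member of `T` that agrees with `x` off `t`. -/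
lemma mem_of_forall_succAbove_mem_image {n : ℕ} {T : Set (Tuple k (n + 1))}
    (hT : (⟨n + 1, T⟩ : Pred k) ∈ andClosure k {σ | σ.1 < n + 1}) {x : Tuple k (n + 1)}
    (hx : ∀ t : Fin (n + 1), (fun i => x (t.succAbove i)) ∈ (fun y i => y (t.succAbove i)) '' T) :
    x ∈ T := by
  obtain ⟨s, σ, z, hσ, -, hiff⟩ := hT
  refine (hiff x).2 fun i => ?_
  obtain ⟨t, ht⟩ := Fin.exists_forall_ne_of_lt (z i) (hσ i)
  obtain ⟨y, hy, hyx⟩ := hx t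
  convert (hiff y).1 hy i using 2 with j
  obtain ⟨j', hj'⟩ := Fin.exists_succAbove_eq (ht j)
  rw [← hj']
  exact (congrFun hyx j').symm

lemma mem_of_forall_proj_mem_of_essential_arity_le {S : Set (Pred k)} {N : ℕ}
    (hN : ∀ ρ ∈ ppClosure k S, Essential k ρ → ρ.1 ≤ N) {n : ℕ} (hn : N ≤ n)
    {T : Set (Tuple k n)} (hT : (⟨n, T⟩ : Pred k) ∈ ppClosure k S) {x : Tuple k n}
    (hx : ∀ w : Fin N ↪ Fin n, (fun i => x (w i)) ∈ (fun y i => y (w i)) '' T) : x ∈ T := by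
  induction n, hn using Nat.le_induction with
  | base =>
    obtain ⟨y, hy, hyx⟩ := hx (Function.Embedding.refl _)
    exact (show y = x from hyx) ▸ hy
  | succ n hn ih =>
    have hand : (⟨n + 1, T⟩ : Pred k) ∈ andClosure k {σ | σ.1 < n + 1} :=
      not_not.1 fun hE => by have := hN _ hT hE; dsimp only at this; omega
    refine mem_of_forall_succAbove_mem_image hand fun t =>
      ih (image_precomp_mem_ppClosure t.succAbove hT) fun w => ?_
    obtain ⟨y, hy, hyx⟩ := hx (w.trans t.succAboveEmb)
    exact ⟨_, ⟨y, hy, rfl⟩, hyx⟩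

end Essential

section NearUnanimity

variable {k : ℕ} {G : Set (Pred k)}

lemma preserves_eval {n : ℕ} (t : Fin n) (ρ : Pred k) : Preserves (fun g : Tuple k n => g t) ρ :=
  fun _ hα => hα t

/-- The existentially quantified variables, indexed by `Tuple k n`, hold the table of the
polymorphism. -/
lemma image_polymorphisms_mem_ppClosure (hG : G.Finite) {n M : ℕ} (col : Fin M → Tuple k n) :
    (⟨M, (fun f j => f (col j)) '' {f : Tuple k n → Fin k | ∀ ρ ∈ G, Preserves f ρ}⟩ : Pred k)
      ∈ ppClosure k G := by
  have := hG.to_subtype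
  refine mem_ppClosure_of_atoms (κ := Tuple k n)
    (ι := (Σ ρ : G, {θ : Fin n → Tuple k ρ.1.1 // ∀ t, θ t ∈ ρ.1.2}) ⊕ Fin M)
    (Sum.elim (fun θ => ⟨θ.1, fun c => .inr fun t => θ.2.1 t c⟩)
      (fun j => .eq (.inl j) (.inr (col j))))
    (Sum.forall.2 ⟨fun θ => Or.inl θ.1.2, fun _ => Or.inr (Or.inl rfl)⟩) fun x => ?_
  simp only [Sum.forall, Sum.elim_inl, Sum.elim_inr, Atom.holds_mk, Atom.holds_eq,
    Sigma.forall, Subtype.forall, Set.mem_image, Set.mem_ofPred_eq, funext_iff]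
  exact exists_congr fun f => and_congr (by rfl) ⟨fun h j => (h j).symm, fun h j => (h j).symm⟩

theorem hasNUF_of_essential_arity_le (hk : 0 < k) (hG : G.Finite) {N : ℕ}
    (hN : ∀ ρ ∈ ppClosure k G, Essential k ρ → ρ.1 ≤ N) : HasNUF k G (N + 1) := by
  -- The columns `update (fun _ => y) i x` of the near-unanimity identities; any `N` of them miss
  -- some position `t`, where the `t`-th projection already takes the value `y` on all of them.
  let e := Fintype.equivFin (Fin k × Fin k × Fin (N + 1))
  let col : Fin _ → Tuple k (N + 1) := fun j =>
    Function.update (fun _ => (e.symm j).2.1) (e.symm j).2.2 (e.symm j).1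
  have hM : N ≤ Fintype.card (Fin k × Fin k × Fin (N + 1)) := by
    simp only [Fintype.card_prod, Fintype.card_fin]
    exact N.le_succ.trans ((Nat.le_mul_of_pos_left _ hk).trans (Nat.le_mul_of_pos_left _ hk))
  obtain ⟨f, hf, hfcol⟩ := mem_of_forall_proj_mem_of_essential_arity_le
      (x := fun j => (e.symm j).2.1) hN hM (image_polymorphisms_mem_ppClosure hG col) <| by
    intro w
    obtain ⟨t, ht⟩ := Fin.exists_forall_ne_of_lt (fun i => (e.symm (w i)).2.2) N.lt_succ_self
    refine ⟨fun j => col j t, ⟨_, fun ρ _ => preserves_eval t ρ, rfl⟩, funext fun i => ?_⟩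
    simp [col, Function.update_of_ne (ht i).symm]
  refine ⟨f, fun x y i => ?_, hf⟩
  simpa [col] using congrFun hfcol (e (x, y, i))

end NearUnanimity

section Walks

variable {X : Type*} {r : X → X → Prop} {a : X} {D : ℕ → Set X}

lemma exists_walk_of_mem (hD0 : D 0 = {a}) (hDs : ∀ i, D (i + 1) = {e | ∃ d ∈ D i, r d e})
    {j : ℕ} {v : X} (hv : v ∈ D j) :
    ∃ p : ℕ → X, p 0 = a ∧ p j = v ∧ ∀ i < j, r (p i) (p (i + 1)) := by
  induction j generalizing v with
  | zero => exact ⟨fun _ => a, rfl, (hD0 ▸ hv).symm, fun i hi => absurd hi i.not_lt_zero⟩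
  | succ j ih =>
    rw [hDs] at hv
    obtain ⟨d, hd, hdv⟩ := hv
    obtain ⟨p, hp0, hpj, hp⟩ := ih hd
    refine ⟨Function.update p (j + 1) v, by simp [hp0], by simp, fun i hi => ?_⟩
    rcases Nat.lt_succ_iff_lt_or_eq.1 hi with hi | rfl
    · simpa [Function.update_of_ne (show i ≠ j + 1 by omega),
        Function.update_of_ne (show i + 1 ≠ j + 1 by omega)] using hp i hi
    · simpa [hpj] using hdv

lemma mem_of_walk (hD0 : D 0 = {a}) (hDs : ∀ i, D (i + 1) = {e | ∃ d ∈ D i, r d e})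
    {p : ℕ → X} (hp0 : p 0 = a) {j : ℕ} (hp : ∀ i < j, r (p i) (p (i + 1))) : p j ∈ D j := by
  induction j with
  | zero => simp [hD0, hp0]
  | succ j ih =>
    rw [hDs]
    exact ⟨p j, ih fun i hi => hp i (by omega), hp j j.lt_succ_self⟩

lemma exists_forall_eq_succ_of_subset_succ [Finite X] {N : ℕ}
    (h : ∀ j ≥ N, D j ⊆ D (j + 1)) : ∃ n, ∀ j ≥ n, D j = D (j + 1) := by
  obtain ⟨n, hn⟩ := WellFoundedGT.monotone_chain_condition
    (⟨fun i => D (N + i), monotone_nat_of_le_succ fun i => h _ (by omega)⟩ : ℕ →o Set X)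
  refine ⟨N + n, fun j hj => ?_⟩
  have h₁ := hn (j - N) (by omega)
  have h₂ := hn (j + 1 - N) (by omega)
  simp only [OrderHom.coe_mk] at h₁ h₂
  rw [Nat.add_sub_cancel' (by omega)] at h₁ h₂
  exact h₁.symm.trans h₂

end Walks

section DelayedWalks

variable {k n : ℕ} {f : Tuple k n → Fin k}

lemma IsNUF.apply_const (hf : IsNUF f) (hn : 0 < n) (y : Fin k) : f (fun _ => y) = y := by
  simpa using hf y y ⟨0, hn⟩

lemma IsNUF.apply_ite (hf : IsNUF f) (hn : 0 < n) (s : ℕ) (x y : Fin k) :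
    f (fun t => if (t : ℕ) = s then x else y) = y := by
  by_cases hs : s < n
  · have : (fun t : Fin n => if (t : ℕ) = s then x else y) =
        Function.update (fun _ => y) ⟨s, hs⟩ x :=
      funext fun t => by simp [Function.update_apply, Fin.ext_iff]
    rw [this, hf]
  · have : (fun t : Fin n => if (t : ℕ) = s then x else y) = fun _ => y :=
      funext fun t => if_neg (by omega)
    rw [this, hf.apply_const hn]

lemma Preserves.apply_mem {C : Set (Fin k)} (hf : Preserves f (memPred k C)) {γ : Tuple k n}
    (hγ : ∀ t, γ t ∈ C) : f γ ∈ C :=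
  hf (fun t _ => γ t) hγ

lemma apply_pre2 {m : ℕ} (d e : Tuple k n) (β : Fin n → Tuple k m) :
    (fun c => f fun t => pre2 (d t) (e t) (β t) c) =
      pre2 (f d) (f e) fun c => f fun t => β t c := by
  funext c
  refine Fin.cases ?_ (Fin.cases ?_ fun c => ?_) c <;> simp [pre2]

/-- `p ∘ pauseAt t` is the walk `p` delayed by one step at time `t`. -/
def pauseAt (t s : ℕ) : ℕ := if s ≤ t then s else s - 1

lemma pauseAt_succ_of_ne {t s : ℕ} (h : s ≠ t) : pauseAt t (s + 1) = pauseAt t s + 1 := by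
  unfold pauseAt; split_ifs <;> omega

/-- Apply `f` to `n` copies of a walk of length `j` to `v`, the `t`-th one delayed at time `t` by a
diagonal tuple `pre2 d d β`: at each step at most one copy deviates from the tail `α`, so
near-unanimity yields a walk of length `j + 1` to `v`. -/
theorem subset_succ_of_isNUF {m : ℕ} {R : Set (Tuple k (m + 2))} {C : Set (Fin k)}
    {α : Tuple k m} {a : Fin k} (ha : a ∈ C) (hdiag : ∀ d ∈ C, ∃ β : Tuple k m, pre2 d d β ∈ R)
    {D : ℕ → Set (Fin k)} (hD0 : D 0 = {a})
    (hDs : ∀ i, D (i + 1) = {e | e ∈ C ∧ ∃ d ∈ D i, pre2 d e α ∈ R})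
    (hn : 0 < n) (hf : IsNUF f) (hR : Preserves f ⟨m + 2, R⟩) (hC : Preserves f (memPred k C))
    {j : ℕ} (hj : n ≤ j) : D j ⊆ D (j + 1) := by
  have hDs_walk : ∀ i, D (i + 1) = {e | ∃ d ∈ D i, e ∈ C ∧ pre2 d e α ∈ R} := fun i => by
    rw [hDs]
    ext e
    exact ⟨fun ⟨hC, d, hd, h⟩ => ⟨d, hd, hC, h⟩, fun ⟨d, hd, hC, h⟩ => ⟨hC, d, hd, h⟩⟩
  intro v hv
  obtain ⟨p, hp0, hpj, hp⟩ := exists_walk_of_mem hD0 hDs_walk hv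
  have hpC : ∀ i ≤ j, p i ∈ C := by
    rintro (_ | i) hi
    · exact hp0 ▸ ha
    · exact (hp i (by omega)).1
  choose! β hβ using hdiag
  let Q s := f fun t => p (pauseAt t s)
  have hQ0 : Q 0 = a := by simp [Q, pauseAt, hp0, hf.apply_const hn]
  have hQj : Q (j + 1) = v := by
    have : ∀ t : Fin n, pauseAt t (j + 1) = j := fun t => by unfold pauseAt; split_ifs <;> omega
    simp [Q, this, hpj, hf.apply_const hn]
  have hrow : ∀ s ≤ j, ∀ t : Fin n,
      pre2 (p (pauseAt t s)) (p (pauseAt t (s + 1))) (if (t : ℕ) = s then β (p s) else α) ∈ R := by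
    intro s hs t
    split_ifs with hts
    · have h₁ : pauseAt t s = s := by unfold pauseAt; split_ifs <;> omega
      have h₂ : pauseAt t (s + 1) = s := by unfold pauseAt; split_ifs <;> omega
      rw [h₁, h₂]
      exact hβ _ (hpC s hs)
    · rw [pauseAt_succ_of_ne (Ne.symm hts)]
      exact (hp _ (by unfold pauseAt; split_ifs <;> omega)).2
  have hstep : ∀ s < j + 1, Q (s + 1) ∈ C ∧ pre2 (Q s) (Q (s + 1)) α ∈ R := by
    intro s hs
    refine ⟨hC.apply_mem fun t => hpC _ (by unfold pauseAt; split_ifs <;> omega), ?_⟩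
    simpa only [apply_pre2, ite_apply, hf.apply_ite hn] using hR _ (hrow s (by omega))
  simpa [hQj] using mem_of_walk hD0 hDs_walk hQ0 hstep

end DelayedWalks

theorem infinite_essential_of_unstable_sets_general (k m : ℕ)
    (C : Set (Fin k)) (α : Tuple k m) (R : Set (Tuple k (m + 2)))
    (a : Fin k) (ha : a ∈ C)
    (hdiag : ∀ d ∈ C, ∃ β : Tuple k m, pre2 d d β ∈ R)
    (D : ℕ → Set (Fin k)) (hD0 : D 0 = {a})
    (hDs : ∀ i, D (i + 1) = { e | e ∈ C ∧ ∃ d ∈ D i, pre2 d e α ∈ R })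
    (hne : ∀ m' : ℕ, 1 ≤ m' → ∃ j, m' ≤ j ∧ D j ≠ D (j + 1)) :
    { σ ∈ ppClosure k ({⟨m + 2, R⟩, memPred k C} ∪ SR k) |
      Essential k σ }.Infinite := by
  intro hfin
  obtain ⟨N, hN⟩ := (hfin.image Sigma.fst).bddAbove
  have hSR : (SR k).Finite :=
    (Set.finite_range fun a : Fin k => (⟨1, {t | t 0 = a}⟩ : Pred k)).subset
      fun _ ⟨a, h⟩ => ⟨a, h.symm⟩
  obtain ⟨f, hf, hfG⟩ := hasNUF_of_essential_arity_le a.pos ((Set.toFinite _).union hSR)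
    fun ρ hρ hE => hN ⟨ρ, ⟨hρ, hE⟩, rfl⟩
  obtain ⟨n, hn⟩ := exists_forall_eq_succ_of_subset_succ (D := D) (N := N + 1) fun j hj =>
    subset_succ_of_isNUF ha hdiag hD0 hDs N.succ_pos hf (hfG _ (.inl (.inl rfl)))
      (hfG _ (.inl (.inr rfl))) hj
  obtain ⟨j, hj, hD⟩ := hne (n + 1) le_add_self
  exact hD (hn j (by omega))

theorem infinite_essential_of_unstable_sets (k m : ℕ) (hk : 2 ≤ k)
    (C : Set (Fin k)) (α : Tuple k m) (R : Set (Tuple k (m + 2)))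
    (a : Fin k) (ha : a ∈ C)
    (hdiag : ∀ d ∈ C, ∃ β : Tuple k m, pre2 d d β ∈ R)
    (D : ℕ → Set (Fin k)) (hD0 : D 0 = {a})
    (hDs : ∀ i, D (i + 1) = { e | e ∈ C ∧ ∃ d ∈ D i, pre2 d e α ∈ R })
    (hne : ∀ m' : ℕ, 1 ≤ m' → ∃ j, m' ≤ j ∧ D j ≠ D (j + 1)) :
    { σ ∈ ppClosure k ({⟨m + 2, R⟩, memPred k C} ∪ SR k) |
      Essential k σ }.Infinite :=
  infinite_essential_of_unstable_sets_general k m C α R a ha hdiag D hD0 hDs hne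
end

section
/- Let k ≥ 2 and ρ ∈ R_k. Then [{ρ}] ∩ R̃_k is finite if and only if [{ρ} ∪ SR_k] ∩ R̃_k is finite. -/
/-! If every essential predicate of `[S]` has arity at most `m`, then every predicate of `[S]` is
the conjunction of its projections onto sets of at most `m` coordinates: a predicate of larger
arity is not essential, hence determined by its projections forgetting one coordinate, which are
again in `[S]` and decomposable by induction on the arity. A predicate `A ∈ [S ∪ SR_k]` satisfies
`A(x) ↔ B(x, 0, 1, …, k - 1)` for some `B ∈ [S]`, obtained by turning each constant `a` into a
fresh variable that is then set to `a`; so `A` inherits the decomposition of `B` and cannot be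
essential if its arity exceeds `m`. Finally, a set of predicates is finite iff its arities are
bounded. -/

section PPClosure

variable {k : ℕ}

lemma ppClosure_mono {S T : Set (Pred k)} (hST : S ⊆ T) : ppClosure k S ⊆ ppClosure k T :=
  fun _ ⟨l, s, σ, z, hσ, hiff⟩ =>
    ⟨l, s, σ, z, fun i => Set.union_subset_union_left _ hST (hσ i), hiff⟩

lemma Fin.append_eq_sumElim_symm {α : Type*} {n l : ℕ} (x : Fin n → α) (y : Fin l → α)
    (q : Fin (n + l)) : Fin.append x y q = Sum.elim x y (finSumFinEquiv.symm q) := by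
  cases q using Fin.addCases <;> simp

lemma mem_ppClosure_of_sumElim {S : Set (Pred k)} {n s : ℕ} {G : Set (Tuple k n)}
    {Y : Type*} [Finite Y] (σ : Fin s → Pred k) (z : ∀ i, Fin (σ i).1 → Fin n ⊕ Y)
    (hσ : ∀ i, σ i ∈ S ∪ {eqPred k, falsePred k})
    (hG : ∀ x, x ∈ G ↔ ∃ y : Y → Fin k, ∀ i, (fun j => Sum.elim x y (z i j)) ∈ (σ i).2) :
    (⟨n, G⟩ : Pred k) ∈ ppClosure k S := by
  let e := Finite.equivFin Y
  refine ⟨Nat.card Y, s, σ, fun i j => finSumFinEquiv ((z i j).map id e), hσ, fun x => ?_⟩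
  simp only [Fin.append_eq_sumElim_symm, Equiv.symm_apply_apply, Sum.elim_map]
  rw [hG]
  constructor
  · rintro ⟨y, hy⟩
    exact ⟨y ∘ e.symm, by simpa [Function.comp_def] using hy⟩
  · rintro ⟨y, hy⟩
    exact ⟨y ∘ e, hy⟩

lemma exists_sumElim_of_mem_ppClosure {S : Set (Pred k)} {n : ℕ} {G : Set (Tuple k n)}
    (hG : (⟨n, G⟩ : Pred k) ∈ ppClosure k S) :
    ∃ (l s : ℕ) (σ : Fin s → Pred k) (z : ∀ i, Fin (σ i).1 → Fin n ⊕ Fin l),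
      (∀ i, σ i ∈ S ∪ {eqPred k, falsePred k}) ∧
      ∀ x, x ∈ G ↔ ∃ y : Fin l → Fin k, ∀ i, (fun j => Sum.elim x y (z i j)) ∈ (σ i).2 := by
  obtain ⟨l, s, σ, z, hσ, hiff⟩ := hG
  exact ⟨l, s, σ, fun i j => finSumFinEquiv.symm (z i j), hσ, by
    simpa only [Fin.append_eq_sumElim_symm] using hiff⟩

lemma mem_ppClosure_of_exists_sumElim_comp {S : Set (Pred k)} {n n' : ℕ} {G : Set (Tuple k n)}
    (hG : (⟨n, G⟩ : Pred k) ∈ ppClosure k S) {W : Type*} [Finite W] (r : Fin n → Fin n' ⊕ W) :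
    (⟨n', {x | ∃ w : W → Fin k, (fun j => Sum.elim x w (r j)) ∈ G}⟩ : Pred k) ∈
      ppClosure k S := by
  obtain ⟨l, s, σ, z, hσ, hiff⟩ := exists_sumElim_of_mem_ppClosure hG
  let v : Fin n ⊕ Fin l → Fin n' ⊕ (W ⊕ Fin l) :=
    Sum.elim (fun q => (r q).map id Sum.inl) (fun p => Sum.inr (Sum.inr p))
  have hv : ∀ x (w : W → Fin k) (y : Fin l → Fin k) q,
      Sum.elim x (Sum.elim w y) (v q) = Sum.elim (fun j => Sum.elim x w (r j)) y q := by
    rintro x w y (q | p) <;> simp [v, Sum.elim_map]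
  refine mem_ppClosure_of_sumElim σ (fun i j => v (z i j)) hσ fun x => ?_
  simp only [Set.mem_ofPred_eq, hiff]
  constructor
  · rintro ⟨w, y, hy⟩
    exact ⟨Sum.elim w y, by simpa only [hv] using hy⟩
  · rintro ⟨wy, h⟩
    rw [← Sum.elim_comp_inl_inr wy] at h
    exact ⟨wy ∘ Sum.inl, wy ∘ Sum.inr, by simpa only [hv] using h⟩

end PPClosure

section Decomposable

variable {k : ℕ}

lemma mem_ppClosure_exists_insertNth {S : Set (Pred k)} {n : ℕ} {G : Set (Tuple k (n + 1))}
    (hG : (⟨n + 1, G⟩ : Pred k) ∈ ppClosure k S) (i : Fin (n + 1)) :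
    (⟨n, {x | ∃ c, Fin.insertNth i c x ∈ G}⟩ : Pred k) ∈ ppClosure k S := by
  let r : Fin (n + 1) → Fin n ⊕ Unit := Fin.insertNth (α := fun _ => _) i (Sum.inr ()) Sum.inl
  have h := mem_ppClosure_of_exists_sumElim_comp hG r
  have hcomp : ∀ (x : Tuple k n) (w : Unit → Fin k),
      (fun j => Sum.elim x w (r j)) = i.insertNth (w ()) x := by
    intro x w
    ext j
    cases j using Fin.succAboveCases i <;> simp [r]
  simp only [hcomp] at h
  convert h using 3
  ext x
  exact ⟨fun ⟨c, hc⟩ => ⟨fun _ => c, hc⟩, fun ⟨w, hw⟩ => ⟨w (), hw⟩⟩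

def LocallyMem {n : ℕ} (m : ℕ) (G : Set (Tuple k n)) (x : Tuple k n) : Prop :=
  ∀ I : Finset (Fin n), I.card ≤ m → ∃ b ∈ G, ∀ j ∈ I, b j = x j

/-- `G` is the conjunction of its projections onto sets of at most `m` coordinates. -/
def IsDecomposable {n : ℕ} (m : ℕ) (G : Set (Tuple k n)) : Prop :=
  ∀ x, LocallyMem m G x → x ∈ G

lemma LocallyMem.mem_of_le {n m : ℕ} {G : Set (Tuple k n)} {x : Tuple k n}
    (hx : LocallyMem m G x) (hnm : n ≤ m) : x ∈ G := by
  obtain ⟨b, hb, hbx⟩ := hx Finset.univ (by simpa using hnm)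
  rwa [← funext fun j => hbx j (Finset.mem_univ j)]

lemma LocallyMem.removeNth {n m : ℕ} {G : Set (Tuple k (n + 1))} {x : Tuple k (n + 1)}
    (hx : LocallyMem m G x) (i : Fin (n + 1)) :
    LocallyMem m {t | ∃ c, Fin.insertNth i c t ∈ G} (i.removeNth x) := by
  intro I hI
  obtain ⟨b, hb, hbx⟩ := hx (I.map i.succAboveEmb) (by simpa using hI)
  refine ⟨i.removeNth b, ⟨b i, by rwa [Fin.insertNth_self_removeNth]⟩, fun j hj => ?_⟩
  exact hbx _ (Finset.mem_map_of_mem _ hj)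

lemma mem_of_not_essential {n : ℕ} {G : Set (Tuple k n)} (hG : ¬ Essential k ⟨n, G⟩)
    {x : Tuple k n} (hx : ∀ i, ∃ b ∈ G, ∀ j ≠ i, b j = x j) : x ∈ G := by
  obtain ⟨s, σ, z, hlt, -, hiff⟩ := not_not.mp hG
  refine (hiff x).mpr fun i => ?_
  obtain ⟨c, hc⟩ : ∃ c, c ∉ Set.range (z i) := by
    by_contra! h
    have := Fintype.card_le_of_surjective (z i) fun c => h c
    simp only [Fintype.card_fin] at this
    exact absurd (hlt i) (by simpa using this)
  obtain ⟨b, hb, hbx⟩ := hx c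
  have hxb : (fun j => x (z i j)) = fun j => b (z i j) :=
    funext fun j => (hbx _ fun h => hc ⟨j, h⟩).symm
  exact hxb ▸ (hiff b).mp hb i

lemma isDecomposable_of_mem_ppClosure {S : Set (Pred k)} {m : ℕ}
    (hS : ∀ τ ∈ ppClosure k S, Essential k τ → τ.1 ≤ m) :
    ∀ {n : ℕ} {G : Set (Tuple k n)}, (⟨n, G⟩ : Pred k) ∈ ppClosure k S → IsDecomposable m G := by
  intro n
  induction n with
  | zero => exact fun _ x hx => hx.mem_of_le (Nat.zero_le m)
  | succ n ih =>
    intro G hG x hx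
    rcases le_or_gt (n + 1) m with hnm | hmn
    · exact hx.mem_of_le hnm
    have hG' : ¬ Essential k ⟨n + 1, G⟩ := fun he => absurd (hS _ hG he) hmn.not_ge
    refine mem_of_not_essential hG' fun i => ?_
    obtain ⟨c, hc⟩ := ih (mem_ppClosure_exists_insertNth hG i) _ (hx.removeNth i)
    refine ⟨_, hc, fun j hj => ?_⟩
    obtain ⟨j, rfl⟩ := Fin.exists_succAbove_eq hj
    simp [Fin.removeNth]

end Decomposable

section Constants

variable {k : ℕ}

lemma exists_eq_iff_of_mem_SR {p : Pred k} (hp : p ∈ SR k) {N : Type*} (w : Fin p.1 → N) :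
    ∃ (q : N) (a : Fin k), ∀ e : N → Fin k, (fun j => e (w j)) ∈ p.2 ↔ e q = a := by
  obtain ⟨a, rfl⟩ := hp
  exact ⟨w 0, a, fun e => Iff.rfl⟩

lemma exists_append_mem_ppClosure_of_mem_ppClosure_union_SR {S : Set (Pred k)} {n : ℕ}
    {A : Set (Tuple k n)} (hA : (⟨n, A⟩ : Pred k) ∈ ppClosure k (S ∪ SR k)) :
    ∃ B : Set (Tuple k (n + k)), (⟨n + k, B⟩ : Pred k) ∈ ppClosure k S ∧
      ∀ x, x ∈ A ↔ Fin.append x id ∈ B := by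
  obtain ⟨l, s, σ, z, hσ, hA⟩ := exists_sumElim_of_mem_ppClosure hA
  let lift : Fin n ⊕ Fin l → Fin (n + k) ⊕ Fin l := Sum.map (Fin.castAdd k) id
  have hlift : ∀ (x : Tuple k n) (y : Fin l → Fin k) q,
      Sum.elim (Fin.append x id) y (lift q) = Sum.elim x y q := by
    rintro x y (q | q) <;> simp [lift]
  have hconstraint : ∀ i, ∃ (τ : Pred k) (w : Fin τ.1 → Fin (n + k) ⊕ Fin l),
      τ ∈ S ∪ {eqPred k, falsePred k} ∧ ∀ (x : Tuple k n) (y : Fin l → Fin k),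
        (fun j => Sum.elim x y (z i j)) ∈ (σ i).2 ↔
          (fun j => Sum.elim (Fin.append x id) y (w j)) ∈ τ.2 := by
    intro i
    by_cases hSR : σ i ∈ SR k
    · obtain ⟨q, a, hqa⟩ := exists_eq_iff_of_mem_SR hSR (z i)
      refine ⟨eqPred k, ![lift q, Sum.inl (Fin.natAdd n a)], Or.inr (Or.inl rfl), fun x y => ?_⟩
      rw [hqa]
      change _ ↔ Sum.elim (Fin.append x id) y (lift q) = Sum.elim (Fin.append x id) y (.inl _)
      simp [hlift]
    · refine ⟨σ i, fun j => lift (z i j), ?_, fun x y => by simp only [hlift]⟩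
      rcases hσ i with (h | h) | h
      exacts [Or.inl h, absurd h hSR, Or.inr h]
  choose τ w hτ hw using hconstraint
  refine ⟨_, mem_ppClosure_of_sumElim τ w hτ fun _ => Iff.rfl, fun x => ?_⟩
  simp only [hA, hw]
  rfl

lemma IsDecomposable.of_append {n n' m : ℕ} {A : Set (Tuple k n)} {B : Set (Tuple k (n + n'))}
    {c : Tuple k n'} (hB : IsDecomposable m B) (hAB : ∀ x, x ∈ A ↔ Fin.append x c ∈ B) :
    IsDecomposable m A := by
  classical
  intro x hx
  refine (hAB x).mpr (hB _ fun I hI => ?_)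
  let I' := Finset.univ.filter fun q => Fin.castAdd n' q ∈ I
  have hI' : I'.card ≤ m := le_trans (Finset.card_le_card_of_injOn (Fin.castAdd n')
    (fun q hq => by simpa [I'] using hq) (Fin.castAdd_injective _ _).injOn) hI
  obtain ⟨b, hb, hbx⟩ := hx I' hI'
  refine ⟨Fin.append b c, (hAB b).mp hb, fun j hj => ?_⟩
  cases j using Fin.addCases with
  | left q => simpa using hbx q (by simpa [I'] using hj)
  | right q => simp

lemma not_essential_of_isDecomposable {n m : ℕ} {G : Set (Tuple k n)} (hG : IsDecomposable m G)
    (hmn : m < n) : ¬ Essential k ⟨n, G⟩ := by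
  classical
  let e := (Fintype.equivFin {K : Finset (Fin n) // K.card = m}).symm
  let v : ∀ i, Fin m → Fin n := fun i => (e i).1.orderEmbOfFin (e i).2
  refine not_not.mpr ⟨_, fun i => ⟨m, {t | ∃ b ∈ G, ∀ j, b (v i j) = t j}⟩, v, fun _ => hmn,
    fun i => (Finset.orderEmbOfFin _ _).injective,
    fun x => ⟨fun hx i => ⟨x, hx, fun _ => rfl⟩, fun hx => hG x fun I hI => ?_⟩⟩
  obtain ⟨K, hIK, -, hK⟩ :=
    Finset.exists_subsuperset_card_eq (Finset.subset_univ I) hI (by simpa using hmn.le)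
  obtain ⟨b, hb, hbx⟩ := hx (e.symm ⟨K, hK⟩)
  refine ⟨b, hb, fun j hj => ?_⟩
  obtain ⟨j', rfl⟩ : j ∈ Set.range (v (e.symm ⟨K, hK⟩)) := by
    simpa [v, Finset.range_orderEmbOfFin] using hIK hj
  exact hbx j'

lemma arity_le_of_essential_of_mem_ppClosure_union_SR {S : Set (Pred k)} {m : ℕ}
    (hS : ∀ τ ∈ ppClosure k S, Essential k τ → τ.1 ≤ m) {τ : Pred k}
    (hτ : τ ∈ ppClosure k (S ∪ SR k)) (hess : Essential k τ) : τ.1 ≤ m := by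
  obtain ⟨n, A⟩ := τ
  obtain ⟨B, hB, hAB⟩ := exists_append_mem_ppClosure_of_mem_ppClosure_union_SR hτ
  by_contra! hmn
  exact not_essential_of_isDecomposable ((isDecomposable_of_mem_ppClosure hS hB).of_append hAB)
    hmn hess

end Constants

lemma finite_iff_exists_forall_arity_le {k : ℕ} {C : Set (Pred k)} :
    C.Finite ↔ ∃ m, ∀ τ ∈ C, τ.1 ≤ m := by
  refine ⟨fun hC => (hC.image Sigma.fst).bddAbove.imp fun m hm τ hτ => hm ⟨τ, hτ, rfl⟩,
    fun ⟨m, hm⟩ => ?_⟩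
  refine ((Set.finite_Iic m).biUnion (t := fun n => Set.range fun G => (⟨n, G⟩ : Pred k))
    fun n _ => Set.finite_range _).subset fun τ hτ => ?_
  exact Set.mem_biUnion (hm τ hτ) ⟨τ.2, rfl⟩

theorem essential_finite_iff_with_SR_general (k : ℕ) (ρ : Pred k) :
    { σ ∈ ppClosure k {ρ} | Essential k σ }.Finite ↔
      { σ ∈ ppClosure k ({ρ} ∪ SR k) | Essential k σ }.Finite := by
  simp only [finite_iff_exists_forall_arity_le, Set.mem_ofPred_eq, and_imp]
  exact ⟨fun ⟨m, hm⟩ => ⟨m, fun _ => arity_le_of_essential_of_mem_ppClosure_union_SR hm⟩,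
    fun ⟨m, hm⟩ => ⟨m, fun τ hτ => hm τ (ppClosure_mono Set.subset_union_left hτ)⟩⟩

theorem essential_finite_iff_with_SR (k : ℕ) (hk : 2 ≤ k) (ρ : Pred k) :
    { σ ∈ ppClosure k {ρ} | Essential k σ }.Finite ↔
      { σ ∈ ppClosure k ({ρ} ∪ SR k) | Essential k σ }.Finite :=
  essential_finite_iff_with_SR_general k ρ
end
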